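/- arXiv:2111.00942 — 4 statements merged into one kernel-verified Lean document; each statement's English description precedes it below -/
import Mathlib

section
/- Suppose Y : ℝ × ℝ → ℝ^n is C² with (Y'·Y')=1, (Ẏ·Y')=0, and Y satisfies the equation Ÿ − Y'' + (1/2)∂σ(|Ẏ|² Y') = 0. Then (Ẏ·Ÿ) = 0 everywhere, i.e. |Ẏ|² is constant along τ. -/
open scoped RealInnerProductSpace

noncomputable def pt {n : ℕ} (Y : ℝ × ℝ → EuclideanSpace ℝ (Fin n)) (p : ℝ × ℝ) :
    EuclideanSpace ℝ (Fin n) := deriv (fun t => Y (t, p.2)) p.1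

noncomputable def ps {n : ℕ} (Y : ℝ × ℝ → EuclideanSpace ℝ (Fin n)) (p : ℝ × ℝ) :
    EuclideanSpace ℝ (Fin n) := deriv (fun s => Y (p.1, s)) p.2

/-!
Solving the equation of motion for `Ÿ` gives
`⟪Ẏ, Ÿ⟫ = (1 - |Ẏ|²/2) ⟪Ẏ, Y''⟫ - (1/2) ∂σ|Ẏ|² ⟪Ẏ, Y'⟫`.
The last inner product vanishes by the gauge condition. Differentiating `⟪Ẏ, Y'⟫ = 0` in `σ`
gives `⟪Ẏ, Y''⟫ = -⟪Ẏ', Y'⟫`, and by symmetry of second derivatives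
`⟪Ẏ', Y'⟫ = ⟪(Y')˙, Y'⟫ = ∂τ|Y'|² / 2 = 0`.
-/

section Slices

variable {F : Type*} [NormedAddCommGroup F] [NormedSpace ℝ F]
  {G : ℝ × ℝ → F} {p : ℝ × ℝ}

lemma hasDerivAt_slice_fst (hG : DifferentiableAt ℝ G p) :
    HasDerivAt (fun t => G (t, p.2)) (fderiv ℝ G p (1, 0)) p.1 :=
  hG.hasFDerivAt.comp_hasDerivAt p.1 ((hasDerivAt_id p.1).prodMk (hasDerivAt_const p.1 p.2))

lemma hasDerivAt_slice_snd (hG : DifferentiableAt ℝ G p) :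
    HasDerivAt (fun s => G (p.1, s)) (fderiv ℝ G p (0, 1)) p.2 :=
  hG.hasFDerivAt.comp_hasDerivAt p.2 ((hasDerivAt_const p.2 p.1).prodMk (hasDerivAt_id p.2))

end Slices

lemma inner_add_inner_eq_zero_of_inner_const {E : Type*} [NormedAddCommGroup E]
    [InnerProductSpace ℝ E] {f g : ℝ → E} {f' g' : E} {t c : ℝ}
    (hf : HasDerivAt f f' t) (hg : HasDerivAt g g' t) (hc : ∀ s, ⟪f s, g s⟫ = c) :
    ⟪f t, g'⟫ + ⟪f', g t⟫ = 0 := by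
  have h := hf.inner ℝ hg
  rw [show (fun s => ⟪f s, g s⟫) = fun _ => c from funext hc] at h
  exact h.unique (hasDerivAt_const t c)

section PartialDerivatives

variable {n : ℕ} {Y G : ℝ × ℝ → EuclideanSpace ℝ (Fin n)} {p : ℝ × ℝ}

lemma pt_eq_fderiv (hG : DifferentiableAt ℝ G p) : pt G p = fderiv ℝ G p (1, 0) :=
  (hasDerivAt_slice_fst hG).deriv

lemma ps_eq_fderiv (hG : DifferentiableAt ℝ G p) : ps G p = fderiv ℝ G p (0, 1) :=
  (hasDerivAt_slice_snd hG).deriv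

lemma hasDerivAt_pt (hG : DifferentiableAt ℝ G p) :
    HasDerivAt (fun t => G (t, p.2)) (pt G p) p.1 := by
  rw [pt_eq_fderiv hG]
  exact hasDerivAt_slice_fst hG

lemma hasDerivAt_ps (hG : DifferentiableAt ℝ G p) :
    HasDerivAt (fun s => G (p.1, s)) (ps G p) p.2 := by
  rw [ps_eq_fderiv hG]
  exact hasDerivAt_slice_snd hG

lemma ps_smul {f : ℝ × ℝ → ℝ} (hf : DifferentiableAt ℝ f p)
    (hG : DifferentiableAt ℝ G p) :
    ps (fun q => f q • G q) p = f p • ps G p + fderiv ℝ f p (0, 1) • G p :=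
  ((hasDerivAt_slice_snd hf).smul (hasDerivAt_ps hG)).deriv

lemma pt_eq_fderiv_apply (hY : Differentiable ℝ Y) : pt Y = fun q => fderiv ℝ Y q (1, 0) :=
  funext fun q => pt_eq_fderiv (hY q)

lemma ps_eq_fderiv_apply (hY : Differentiable ℝ Y) : ps Y = fun q => fderiv ℝ Y q (0, 1) :=
  funext fun q => ps_eq_fderiv (hY q)

lemma differentiable_fderiv_of_contDiff_two (hY : ContDiff ℝ 2 Y) :
    Differentiable ℝ (fderiv ℝ Y) :=
  (hY.fderiv_right (m := 1) le_rfl).differentiable one_ne_zero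

lemma differentiable_pt (hY : ContDiff ℝ 2 Y) : Differentiable ℝ (pt Y) := by
  rw [pt_eq_fderiv_apply (hY.differentiable two_ne_zero)]
  exact (differentiable_fderiv_of_contDiff_two hY).clm_apply (differentiable_const _)

lemma differentiable_ps (hY : ContDiff ℝ 2 Y) : Differentiable ℝ (ps Y) := by
  rw [ps_eq_fderiv_apply (hY.differentiable two_ne_zero)]
  exact (differentiable_fderiv_of_contDiff_two hY).clm_apply (differentiable_const _)

lemma ps_pt_eq_pt_ps (hY : ContDiff ℝ 2 Y) (p : ℝ × ℝ) : ps (pt Y) p = pt (ps Y) p := by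
  have hY' := hY.differentiable two_ne_zero
  have hD := differentiable_fderiv_of_contDiff_two hY p
  have hst : ps (pt Y) p = fderiv ℝ (fderiv ℝ Y) p (0, 1) (1, 0) := by
    rw [pt_eq_fderiv_apply hY']
    simpa [ps] using
      ((hasDerivAt_slice_snd hD).clm_apply (hasDerivAt_const p.2 ((1 : ℝ), (0 : ℝ)))).deriv
  have hts : pt (ps Y) p = fderiv ℝ (fderiv ℝ Y) p (1, 0) (0, 1) := by
    rw [ps_eq_fderiv_apply hY']
    simpa [pt] using
      ((hasDerivAt_slice_fst hD).clm_apply (hasDerivAt_const p.1 ((0 : ℝ), (1 : ℝ)))).deriv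
  rw [hst, hts, (hY.contDiffAt.isSymmSndFDerivAt (by simp)).eq]

end PartialDerivatives

theorem stmt2 {n : ℕ} (Y : ℝ × ℝ → EuclideanSpace ℝ (Fin n))
    (hY : ContDiff ℝ 2 Y)
    (h1 : ∀ p : ℝ × ℝ, ⟪ps Y p, ps Y p⟫ = 1)
    (h2 : ∀ p : ℝ × ℝ, ⟪pt Y p, ps Y p⟫ = 0)
    (heom : ∀ p : ℝ × ℝ,
      pt (pt Y) p - ps (ps Y) p
        + (1 / 2 : ℝ) • ps (fun q => (‖pt Y q‖ ^ 2 : ℝ) • ps Y q) p = 0) :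
    ∀ p : ℝ × ℝ, ⟪pt Y p, pt (pt Y) p⟫ = 0 := by
  intro p
  have hτ : ⟪pt (ps Y) p, ps Y p⟫ = 0 := by
    have h := inner_add_inner_eq_zero_of_inner_const (hasDerivAt_pt (differentiable_ps hY p))
      (hasDerivAt_pt (differentiable_ps hY p)) fun t => h1 (t, p.2)
    rw [real_inner_comm] at h
    linarith
  have hσ : ⟪pt Y p, ps (ps Y) p⟫ = 0 := by
    have h := inner_add_inner_eq_zero_of_inner_const (hasDerivAt_ps (differentiable_pt hY p))
      (hasDerivAt_ps (differentiable_ps hY p)) fun s => h2 (p.1, s)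
    rwa [ps_pt_eq_pt_ps hY, hτ, add_zero] at h
  have hYtt : pt (pt Y) p = ps (ps Y) p
      - (1 / 2 : ℝ) • ps (fun q => (‖pt Y q‖ ^ 2 : ℝ) • ps Y q) p := by
    rw [eq_sub_iff_add_eq, ← sub_eq_zero, ← heom p]
    abel
  rw [hYtt, ps_smul ((differentiable_pt hY p).norm_sq ℝ) (differentiable_ps hY p)]
  simp only [inner_sub_right, inner_smul_right, inner_add_right, hσ, h2 p]
  ring
end

section
/- Let γ ∈ (0, π/2), v² = 2cos²γ/(1+cos²γ), and a, b, c as in the spiral solution. Then the string configuration Y(τ,σ) = (a(vτ+σ) + b(vτ−σ), c cos(vτ−σ), c sin(vτ−σ)) satisfies |Ẏ|² = sin²γ, |Y'|² = cos²γ, and (Ẏ·Y') = 0 everywhere. -/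
/-!
The τ-derivative of the spiral is `(v(a+b), -cv sin φ, cv cos φ)` and the σ-derivative is
`(a-b, c sin φ, -c cos φ)` with `φ = vτ - σ`, so by `sin² + cos² = 1` the three constraints reduce
to the phase-independent identities `v²(a+b)² + c²v² = sin²γ`, `(a-b)² + c² = cos²γ` and
`(a+b)(a-b) = c²`. With `R = √(sin²γ + v²cos²γ)` one has `v(a+b) = sin²γ/R`,
`a - b = v cos²γ/R` and `c = sinγ cosγ/R`, from which all three follow.
-/

open scoped RealInnerProductSpace

open Real WithLp

theorem HasDerivAt.toLp {𝕜 ι : Type*} [NontriviallyNormedField 𝕜] [Fintype ι]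
    {E : ι → Type*} [∀ i, NormedAddCommGroup (E i)] [∀ i, NormedSpace 𝕜 (E i)]
    (p : ENNReal) [Fact (1 ≤ p)] {f : 𝕜 → ∀ i, E i} {f' : ∀ i, E i} {x : 𝕜}
    (hf : HasDerivAt f f' x) : HasDerivAt (fun t => toLp p (f t)) (toLp p f') x :=
  (PiLp.hasFDerivAt_toLp p (f x)).comp_hasDerivAt x hf

theorem hasDerivAt_vec3 {𝕜 F : Type*} [NontriviallyNormedField 𝕜] [NormedAddCommGroup F]
    [NormedSpace 𝕜 F] {f g h : 𝕜 → F} {f' g' h' : F} {x : 𝕜}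
    (hf : HasDerivAt f f' x) (hg : HasDerivAt g g' x) (hh : HasDerivAt h h' x) :
    HasDerivAt (fun t => ![f t, g t, h t]) ![f', g', h'] x :=
  hf.finCons <| hg.finCons <| hh.finCons <|
    (hasDerivAt_const x ![]).congr_deriv (Subsingleton.elim _ _)

noncomputable def spiral (a b c v : ℝ) (p : ℝ × ℝ) : EuclideanSpace ℝ (Fin 3) :=
  toLp 2 ![a * (v * p.1 + p.2) + b * (v * p.1 - p.2), c * cos (v * p.1 - p.2),
    c * sin (v * p.1 - p.2)]

variable (a b c v : ℝ)

theorem hasDerivAt_spiral_fst (τ σ : ℝ) :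
    HasDerivAt (fun t => spiral a b c v (t, σ))
      (toLp 2 ![v * (a + b), -(c * v * sin (v * τ - σ)), c * v * cos (v * τ - σ)]) τ := by
  have hphase : HasDerivAt (fun t => v * t - σ) v τ :=
    ((hasDerivAt_id' τ).const_mul v).sub_const σ |>.congr_deriv (mul_one v)
  refine HasDerivAt.toLp 2 (hasDerivAt_vec3 ?_ ?_ ?_)
  · exact ((((hasDerivAt_id' τ).const_mul v).add_const σ).const_mul a).add (hphase.const_mul b)
      |>.congr_deriv (by ring)
  · exact (hphase.cos.const_mul c).congr_deriv (by ring)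
  · exact (hphase.sin.const_mul c).congr_deriv (by ring)

theorem hasDerivAt_spiral_snd (τ σ : ℝ) :
    HasDerivAt (fun s => spiral a b c v (τ, s))
      (toLp 2 ![a - b, c * sin (v * τ - σ), -(c * cos (v * τ - σ))]) σ := by
  have hphase : HasDerivAt (fun s => v * τ - s) (-1) σ := (hasDerivAt_id' σ).const_sub (v * τ)
  refine HasDerivAt.toLp 2 (hasDerivAt_vec3 ?_ ?_ ?_)
  · exact (((hasDerivAt_id' σ).const_add (v * τ)).const_mul a).add (hphase.const_mul b)
      |>.congr_deriv (by ring)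
  · exact (hphase.cos.const_mul c).congr_deriv (by ring)
  · exact (hphase.sin.const_mul c).congr_deriv (by ring)

theorem inner_toLp_vec3 (x₀ x₁ x₂ y₀ y₁ y₂ : ℝ) :
    ⟪toLp 2 ![x₀, x₁, x₂], toLp 2 ![y₀, y₁, y₂]⟫ = x₀ * y₀ + x₁ * y₁ + x₂ * y₂ := by
  simp [EuclideanSpace.inner_toLp_toLp, dotProduct, Fin.sum_univ_three, mul_comm]

theorem norm_sq_pt_spiral (p : ℝ × ℝ) :
    ‖pt (spiral a b c v) p‖ ^ 2 = (v * (a + b)) ^ 2 + (c * v) ^ 2 := by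
  rw [pt, (hasDerivAt_spiral_fst a b c v p.1 p.2).deriv, ← real_inner_self_eq_norm_sq,
    inner_toLp_vec3]
  linear_combination (c * v) ^ 2 * sin_sq_add_cos_sq (v * p.1 - p.2)

theorem norm_sq_ps_spiral (p : ℝ × ℝ) :
    ‖ps (spiral a b c v) p‖ ^ 2 = (a - b) ^ 2 + c ^ 2 := by
  rw [ps, (hasDerivAt_spiral_snd a b c v p.1 p.2).deriv, ← real_inner_self_eq_norm_sq,
    inner_toLp_vec3]
  linear_combination c ^ 2 * sin_sq_add_cos_sq (v * p.1 - p.2)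

theorem inner_pt_ps_spiral (p : ℝ × ℝ) :
    ⟪pt (spiral a b c v) p, ps (spiral a b c v) p⟫ = v * ((a + b) * (a - b) - c ^ 2) := by
  rw [pt, ps, (hasDerivAt_spiral_fst a b c v p.1 p.2).deriv,
    (hasDerivAt_spiral_snd a b c v p.1 p.2).deriv, inner_toLp_vec3]
  linear_combination -(c ^ 2 * v) * sin_sq_add_cos_sq (v * p.1 - p.2)

theorem spiral_virasoro_coefficients {s k v a b c : ℝ} (hv : v ≠ 0)
    (hA : 0 < s ^ 2 + v ^ 2 * k ^ 2)
    (ha : a = √(s ^ 2 + v ^ 2 * k ^ 2) / (2 * v))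
    (hb : b = (s ^ 2 - v ^ 2 * k ^ 2) / (2 * v * √(s ^ 2 + v ^ 2 * k ^ 2)))
    (hc : c = s * k / √(s ^ 2 + v ^ 2 * k ^ 2)) :
    (v * (a + b)) ^ 2 + (c * v) ^ 2 = s ^ 2 ∧ (a - b) ^ 2 + c ^ 2 = k ^ 2 ∧
      (a + b) * (a - b) = c ^ 2 := by
  set R := √(s ^ 2 + v ^ 2 * k ^ 2)
  have hR : R ^ 2 = s ^ 2 + v ^ 2 * k ^ 2 := sq_sqrt hA.le
  have hR0 : R ≠ 0 := (sqrt_pos.2 hA).ne'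
  have hadd : v * (a + b) = s ^ 2 / R := by
    rw [ha, hb]; field_simp; linear_combination hR
  have hsub : a - b = v * k ^ 2 / R := by
    rw [ha, hb]; field_simp; linear_combination hR
  refine ⟨?_, ?_, mul_left_cancel₀ hv ?_⟩
  · rw [hadd, hc]; field_simp; linear_combination -s ^ 2 * hR
  · rw [hsub, hc]; field_simp; linear_combination -k ^ 2 * hR
  · rw [← mul_assoc, hadd, hsub, hc]; field_simp

theorem stmt8 (γ v a b c : ℝ)
    (hγ : γ ∈ Set.Ioo 0 (Real.pi / 2))
    (hv : v ^ 2 = 2 * Real.cos γ ^ 2 / (1 + Real.cos γ ^ 2))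
    (ha : a = Real.sqrt (Real.sin γ ^ 2 + v ^ 2 * Real.cos γ ^ 2) / (2 * v))
    (hb : b = (Real.sin γ ^ 2 - v ^ 2 * Real.cos γ ^ 2) /
      (2 * v * Real.sqrt (Real.sin γ ^ 2 + v ^ 2 * Real.cos γ ^ 2)))
    (hc : c = Real.sin γ * Real.cos γ /
      Real.sqrt (Real.sin γ ^ 2 + v ^ 2 * Real.cos γ ^ 2))
    (Y : ℝ × ℝ → EuclideanSpace ℝ (Fin 3))
    (hY : Y = fun p => (WithLp.equiv 2 (Fin 3 → ℝ)).symm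
      ![a * (v * p.1 + p.2) + b * (v * p.1 - p.2),
        c * Real.cos (v * p.1 - p.2), c * Real.sin (v * p.1 - p.2)]) :
    ∀ p : ℝ × ℝ,
      ‖pt Y p‖ ^ 2 = Real.sin γ ^ 2 ∧
      ‖ps Y p‖ ^ 2 = Real.cos γ ^ 2 ∧
      ⟪pt Y p, ps Y p⟫ = 0 := by
  obtain rfl : Y = spiral a b c v := hY
  have hcos : cos γ ≠ 0 := (cos_pos_of_mem_Ioo ⟨by linarith [hγ.1, pi_pos], hγ.2⟩).ne'
  have hv0 : v ≠ 0 := by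
    rintro rfl
    have : (0 : ℝ) < 2 * cos γ ^ 2 / (1 + cos γ ^ 2) := by positivity
    rw [← hv] at this
    norm_num at this
  obtain ⟨hpt, hps, hinner⟩ := spiral_virasoro_coefficients hv0 (by positivity) ha hb hc
  intro p
  refine ⟨?_, ?_, ?_⟩
  · rw [norm_sq_pt_spiral, hpt]
  · rw [norm_sq_ps_spiral, hps]
  · rw [inner_pt_ps_spiral, hinner, sub_self, mul_zero]
end

section
/- With the same notation (A² > 0, ρ > 0), the momenta satisfy P² = ρ²(ε/2 + 1)²(|Y'|² − εT'²), where ε = |Ẏ⊥|²|Y'|²/A². -/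
open scoped RealInnerProductSpace

/-- With `V = |Y'|²`, `U = |Ẏ⊥|²`, `t = Ṫ⊥`, `s = T'`, this is `|Y'|² − ε T'² = Ṫ⊥² |Y'|⁴ / A²`. -/
theorem sub_div_mul_sq_eq_of_eq_add {t s V U A : ℝ} (hA : A = t ^ 2 * V + s ^ 2 * U)
    (hA0 : A ≠ 0) : V - U * V / A * s ^ 2 = t ^ 2 * V ^ 2 / A := by
  field_simp
  linear_combination V * hA

theorem stmt14_general {n : ℕ} (ρ ts : ℝ) (v : EuclideanSpace ℝ (Fin n))
    (tdperp : ℝ) (uperp : EuclideanSpace ℝ (Fin n)) (A2 ε P : ℝ)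
    (hA2 : A2 = tdperp ^ 2 * ‖v‖ ^ 2 + ts ^ 2 * ‖uperp‖ ^ 2)
    (hApos : 0 < A2)
    (hε : ε = ‖uperp‖ ^ 2 * ‖v‖ ^ 2 / A2)
    (hP : P = -(ρ / Real.sqrt A2) * (ε / 2 + 1) * (tdperp * ‖v‖ ^ 2)) :
    P ^ 2 = ρ ^ 2 * (ε / 2 + 1) ^ 2 * (‖v‖ ^ 2 - ε * ts ^ 2) := by
  have hdefect : ‖v‖ ^ 2 - ε * ts ^ 2 = tdperp ^ 2 * (‖v‖ ^ 2) ^ 2 / A2 :=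
    hε ▸ sub_div_mul_sq_eq_of_eq_add hA2 hApos.ne'
  rw [hP, hdefect]
  calc (-(ρ / Real.sqrt A2) * (ε / 2 + 1) * (tdperp * ‖v‖ ^ 2)) ^ 2
      = ρ ^ 2 / Real.sqrt A2 ^ 2 * (ε / 2 + 1) ^ 2 * (tdperp * ‖v‖ ^ 2) ^ 2 := by ring
    _ = ρ ^ 2 * (ε / 2 + 1) ^ 2 * (tdperp ^ 2 * (‖v‖ ^ 2) ^ 2 / A2) := by
      rw [Real.sq_sqrt hApos.le]; ring

theorem stmt14 {n : ℕ} (ρ td ts : ℝ) (u v : EuclideanSpace ℝ (Fin n)) (hv : v ≠ 0)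
    (hρ : 0 < ρ)
    (tdperp : ℝ) (uperp : EuclideanSpace ℝ (Fin n)) (A2 ε P : ℝ)
    (Pvec : EuclideanSpace ℝ (Fin n))
    (htd : tdperp = td - (⟪u, v⟫ / ‖v‖ ^ 2) * ts)
    (hu : uperp = u - (⟪u, v⟫ / ‖v‖ ^ 2) • v)
    (hA2 : A2 = tdperp ^ 2 * ‖v‖ ^ 2 + ts ^ 2 * ‖uperp‖ ^ 2)
    (hApos : 0 < A2)
    (hε : ε = ‖uperp‖ ^ 2 * ‖v‖ ^ 2 / A2)
    (hP : P = -(ρ / Real.sqrt A2) * (ε / 2 + 1) * (tdperp * ‖v‖ ^ 2))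
    (hPvec : Pvec = (ρ / Real.sqrt A2) •
      (‖v‖ ^ 2 • uperp - (ε / 2 + 1) • (ts ^ 2 • uperp - (tdperp * ts) • v))) :
    P ^ 2 = ρ ^ 2 * (ε / 2 + 1) ^ 2 * (‖v‖ ^ 2 - ε * ts ^ 2) :=
  stmt14_general ρ ts v tdperp uperp A2 ε P hA2 hApos hε hP
end

section
/- With the same notation (A² > 0, ρ > 0), the spatial momenta satisfy Σᵢ Pᵢ² = ρ²(T'² + ε|Y'|² − εT'² − (3/4)ε²T'²), where ε = |Ẏ⊥|²|Y'|²/A². -/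
/-! Writing `c = ρ / √A²`, the momentum is `c • ((|Y'|² - (ε/2+1) T'²) • Ẏ⊥ + ((ε/2+1) Ṫ⊥ T') • Y')`,
a combination of the orthogonal vectors `Ẏ⊥` and `Y'`, so Pythagoras gives its squared norm.
Substituting `Ṫ⊥² |Y'|² = A² - T'² |Ẏ⊥|²` and `|Ẏ⊥|² |Y'|² = ε A²` turns the result into `c² A²` times
the claimed polynomial in `ε`, and `c² A² = ρ²`. -/

open scoped RealInnerProductSpace

section InnerProductSpace

variable {E : Type*} [NormedAddCommGroup E] [InnerProductSpace ℝ E]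

theorem inner_sub_inner_div_norm_sq_smul_self (u v : E) :
    ⟪u - (⟪u, v⟫ / ‖v‖ ^ 2) • v, v⟫ = 0 := by
  rw [inner_sub_left, real_inner_smul_left, real_inner_self_eq_norm_sq]
  rcases eq_or_ne v 0 with rfl | hv
  · simp
  · field_simp [norm_ne_zero_iff.mpr hv]
    ring

theorem norm_smul_add_smul_sq_of_inner_eq_zero {x y : E} (h : ⟪x, y⟫ = 0) (a b : ℝ) :
    ‖a • x + b • y‖ ^ 2 = a ^ 2 * ‖x‖ ^ 2 + b ^ 2 * ‖y‖ ^ 2 := by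
  have hab : ⟪a • x, b • y⟫ = 0 := by
    rw [real_inner_smul_left, real_inner_smul_right, h, mul_zero, mul_zero]
  rw [norm_add_sq_real, hab, mul_zero, add_zero, norm_smul, norm_smul, mul_pow, mul_pow,
    Real.norm_eq_abs, Real.norm_eq_abs, sq_abs, sq_abs]

end InnerProductSpace

theorem momentum_coeff_identity {a b s t A ε : ℝ} (hA : A = t ^ 2 * a + s ^ 2 * b)
    (hε : ε * A = b * a) :
    (a - (ε / 2 + 1) * s ^ 2) ^ 2 * b + ((ε / 2 + 1) * (t * s)) ^ 2 * a
      = A * (s ^ 2 + ε * a - ε * s ^ 2 - 3 / 4 * ε ^ 2 * s ^ 2) := by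
  linear_combination (-(ε / 2 + 1) ^ 2 * s ^ 2) * hA + ((ε + 2) * s ^ 2 - a) * hε

theorem stmt15_general {n : ℕ} (ρ ts : ℝ) (u v : EuclideanSpace ℝ (Fin n))
    (tdperp : ℝ) (uperp : EuclideanSpace ℝ (Fin n)) (A2 ε : ℝ)
    (Pvec : EuclideanSpace ℝ (Fin n))
    (hu : uperp = u - (⟪u, v⟫ / ‖v‖ ^ 2) • v)
    (hA2 : A2 = tdperp ^ 2 * ‖v‖ ^ 2 + ts ^ 2 * ‖uperp‖ ^ 2)
    (hApos : 0 < A2)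
    (hε : ε = ‖uperp‖ ^ 2 * ‖v‖ ^ 2 / A2)
    (hPvec : Pvec = (ρ / Real.sqrt A2) •
      (‖v‖ ^ 2 • uperp - (ε / 2 + 1) • (ts ^ 2 • uperp - (tdperp * ts) • v))) :
    ‖Pvec‖ ^ 2 = ρ ^ 2 * (ts ^ 2 + ε * ‖v‖ ^ 2 - ε * ts ^ 2 - (3 / 4) * ε ^ 2 * ts ^ 2) := by
  have horth : ⟪uperp, v⟫ = 0 := hu ▸ inner_sub_inner_div_norm_sq_smul_self u v
  have hPvec' : Pvec = (ρ / Real.sqrt A2) •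
      ((‖v‖ ^ 2 - (ε / 2 + 1) * ts ^ 2) • uperp + ((ε / 2 + 1) * (tdperp * ts)) • v) := by
    rw [hPvec]; module
  have hεA : ε * A2 = ‖uperp‖ ^ 2 * ‖v‖ ^ 2 := by
    rw [hε, div_mul_cancel₀ _ hApos.ne']
  rw [hPvec', norm_smul, mul_pow, norm_smul_add_smul_sq_of_inner_eq_zero horth,
    momentum_coeff_identity hA2 hεA, Real.norm_eq_abs, sq_abs, div_pow,
    Real.sq_sqrt hApos.le]
  field_simp

theorem stmt15 {n : ℕ} (ρ td ts : ℝ) (u v : EuclideanSpace ℝ (Fin n)) (hv : v ≠ 0)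
    (hρ : 0 < ρ)
    (tdperp : ℝ) (uperp : EuclideanSpace ℝ (Fin n)) (A2 ε P : ℝ)
    (Pvec : EuclideanSpace ℝ (Fin n))
    (htd : tdperp = td - (⟪u, v⟫ / ‖v‖ ^ 2) * ts)
    (hu : uperp = u - (⟪u, v⟫ / ‖v‖ ^ 2) • v)
    (hA2 : A2 = tdperp ^ 2 * ‖v‖ ^ 2 + ts ^ 2 * ‖uperp‖ ^ 2)
    (hApos : 0 < A2)
    (hε : ε = ‖uperp‖ ^ 2 * ‖v‖ ^ 2 / A2)
    (hP : P = -(ρ / Real.sqrt A2) * (ε / 2 + 1) * (tdperp * ‖v‖ ^ 2))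
    (hPvec : Pvec = (ρ / Real.sqrt A2) •
      (‖v‖ ^ 2 • uperp - (ε / 2 + 1) • (ts ^ 2 • uperp - (tdperp * ts) • v))) :
    ‖Pvec‖ ^ 2 = ρ ^ 2 * (ts ^ 2 + ε * ‖v‖ ^ 2 - ε * ts ^ 2 - (3 / 4) * ε ^ 2 * ts ^ 2) :=
  stmt15_general ρ ts u v tdperp uperp A2 ε Pvec hu hA2 hApos hε hPvec
end
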